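/- arXiv:1608.02557 — 2 statements merged into one kernel-verified Lean document; each statement's English description precedes it below -/
import Mathlib

section
/- Every smooth function φ(i, u) on ℤ × ℝ satisfying the functional equation φ(i+2, a(i)·u₂ + b(i)·u₁) = a(i)·φ(i+1, u₂) + b(i)·φ(i, u₁) for all u₁, u₂ ∈ ℝ and all i, where a(i)·b(i) ≠ 0, has the form φ(i, u) = c·u + β(i) where c ∈ ℝ is constant and β solves β(i+2) = a(i)·β(i+1) + b(i)·β(i). -/
theorem symmetries_of_linear_second_order_difference_equation
    (a b : ℤ → ℝ) (hab : ∀ i : ℤ, a i * b i ≠ 0)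
    (φ : ℤ → ℝ → ℝ)
    (hφ : ∀ i : ℤ, ContDiff ℝ (⊤ : ℕ∞) (φ i))
    (heq : ∀ (i : ℤ) (u₁ u₂ : ℝ),
      φ (i + 2) (a i * u₂ + b i * u₁) = a i * φ (i + 1) u₂ + b i * φ i u₁) :
    ∃ (c : ℝ) (β : ℤ → ℝ),
      (∀ i : ℤ, β (i + 2) = a i * β (i + 1) + b i * β i) ∧
      (∀ (i : ℤ) (u : ℝ), φ i u = c * u + β i) := by
  have ha : ∀ i, a i ≠ 0 := fun i => left_ne_zero_of_mul (hab i)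
  have hb : ∀ i, b i ≠ 0 := fun i => right_ne_zero_of_mul (hab i)
  have hdiff : ∀ i, Differentiable ℝ (φ i) := fun i => (hφ i).differentiable (by simp)
  -- differentiate in u₁
  have hA1 : ∀ (i : ℤ) (u₁ u₂ : ℝ),
      deriv (φ (i+2)) (a i * u₂ + b i * u₁) = deriv (φ i) u₁ := by
    intro i u₁ u₂
    have haff : HasDerivAt (fun u : ℝ => a i * u₂ + b i * u) (b i) u₁ := by
      simpa using ((hasDerivAt_id u₁).const_mul (b i)).const_add (a i * u₂)
    have h1 : HasDerivAt (fun u => φ (i+2) (a i * u₂ + b i * u))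
        (deriv (φ (i+2)) (a i * u₂ + b i * u₁) * b i) u₁ :=
      (((hdiff (i+2)) (a i * u₂ + b i * u₁)).hasDerivAt).comp u₁ haff
    have h2 : HasDerivAt (fun u => φ (i+2) (a i * u₂ + b i * u))
        (b i * deriv (φ i) u₁) u₁ := by
      have hfun : (fun u => φ (i+2) (a i * u₂ + b i * u))
          = (fun u => a i * φ (i+1) u₂ + b i * φ i u) := by
        funext u; exact heq i u u₂
      rw [hfun]
      exact (((hdiff i) u₁).hasDerivAt.const_mul (b i)).const_add (a i * φ (i+1) u₂)
    have h3 := h1.unique h2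
    rw [mul_comm] at h3
    exact mul_left_cancel₀ (hb i) h3
  -- differentiate in u₂
  have hA2 : ∀ (i : ℤ) (u₁ u₂ : ℝ),
      deriv (φ (i+2)) (a i * u₂ + b i * u₁) = deriv (φ (i+1)) u₂ := by
    intro i u₁ u₂
    have haff : HasDerivAt (fun u : ℝ => a i * u + b i * u₁) (a i) u₂ := by
      simpa using (((hasDerivAt_id u₂).const_mul (a i)).add_const (b i * u₁))
    have h1 : HasDerivAt (fun u => φ (i+2) (a i * u + b i * u₁))
        (deriv (φ (i+2)) (a i * u₂ + b i * u₁) * a i) u₂ :=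
      (((hdiff (i+2)) (a i * u₂ + b i * u₁)).hasDerivAt).comp u₂ haff
    have h2 : HasDerivAt (fun u => φ (i+2) (a i * u + b i * u₁))
        (a i * deriv (φ (i+1)) u₂) u₂ := by
      have hfun : (fun u => φ (i+2) (a i * u + b i * u₁))
          = (fun u => b i * φ i u₁ + a i * φ (i+1) u) := by
        funext u; rw [heq i u₁ u]; ring
      rw [hfun]
      exact (((hdiff (i+1)) u₂).hasDerivAt.const_mul (a i)).const_add (b i * φ i u₁)
    have h3 := h1.unique h2
    rw [mul_comm] at h3
    exact mul_left_cancel₀ (ha i) h3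
  -- combine: deriv (φ i) u₁ = deriv (φ (i+1)) u₂ for all u₁ u₂
  have hA : ∀ (i : ℤ) (u₁ u₂ : ℝ), deriv (φ i) u₁ = deriv (φ (i+1)) u₂ := by
    intro i u₁ u₂
    rw [← hA1 i u₁ u₂, hA2 i u₁ u₂]
  set c := deriv (φ 0) 0 with hc
  have hder0 : ∀ i : ℤ, deriv (φ i) 0 = c := by
    intro i
    induction i using Int.induction_on with
    | zero => rfl
    | succ k ih => rw [← hA k 0 0]; exact ih
    | pred k ih => rw [hA (-(k:ℤ)-1) 0 0]; simpa using ih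
  have hder : ∀ (i : ℤ) (u : ℝ), deriv (φ i) u = c := by
    intro i u
    rw [hA i u 0, hder0 (i+1)]
  refine ⟨c, fun i => φ i 0, ?_, ?_⟩
  · intro i
    have := heq i 0 0
    simpa using this
  · intro i u
    have hψdiff : Differentiable ℝ (fun u => φ i u - c * u) := by
      exact (hdiff i).sub ((differentiable_id.const_mul c))
    have hψder : ∀ x : ℝ, deriv (fun u => φ i u - c * u) x = 0 := by
      intro x
      have h1 : HasDerivAt (fun u => φ i u - c * u) (deriv (φ i) x - c) x :=
        ((hdiff i) x).hasDerivAt.sub (by simpa using (hasDerivAt_id x).const_mul c)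
      rw [h1.deriv, hder i x, sub_self]
    have hconst := is_const_of_deriv_eq_zero hψdiff hψder u 0
    simp only [mul_zero, sub_zero] at hconst
    linarith [hconst]
end

section
/- If a smooth function φ(i, n, u) on ℤ² × ℝ satisfies φ(i+1, n+1, u + 1/(w − v)) = φ(i, n, u) + (φ(i, n+1, v) − φ(i+1, n, w))/(w − v)² for all u, v, w ∈ ℝ with w ≠ v, then φ'' (second derivative in u) vanishes identically, so φ is affine in u: φ(i, n, u) = α(i,n)·u + β(i,n). -/
/-!
Taking `v = 0` and `w = 1 / a` in the determining equation shows that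
`φ (i+1) (n+1) (u + a) - φ i n u` depends on `a` alone whenever `a ≠ 0`. Hence differences
of `ψ = φ (i+1) (n+1)` are invariant under every translation, i.e. `ψ - ψ 0` is additive;
being continuous, it is linear, so each `φ i n` is affine and its second derivative vanishes.
-/

theorem eq_smul_add_of_continuous_of_sub_add_eq {F : Type*} [AddCommGroup F] [Module ℝ F]
    [TopologicalSpace F] [IsTopologicalAddGroup F] [ContinuousSMul ℝ F] [T2Space F]
    {f : ℝ → F} (hf : Continuous f) (hshift : ∀ x y s, f (x + s) - f (y + s) = f x - f y)
    (x : ℝ) : f x = x • (f 1 - f 0) + f 0 := by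
  let g : ℝ →+ F := AddMonoidHom.mk' (fun x => f x - f 0) fun x y => by
    have := hshift x 0 y
    rw [zero_add] at this
    rw [← this]
    abel
  have hg := map_real_smul g (hf.sub continuous_const) x 1
  simp only [smul_eq_mul, mul_one] at hg
  simpa [g, sub_eq_iff_eq_add] using hg

theorem forall_sub_add_eq_of_forall_ne_zero {G : Type*} [AddCommGroup G] {ψ χ : ℝ → G}
    (h : ∀ a ≠ 0, ∀ x y, ψ (x + a) - ψ (y + a) = χ x - χ y) (x y s : ℝ) :
    ψ (x + s) - ψ (y + s) = ψ x - ψ y := by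
  set a := |s| + 1
  have ha : a ≠ 0 := by positivity
  have has : a + s ≠ 0 := by linarith [neg_abs_le s]
  calc ψ (x + s) - ψ (y + s) = ψ (x - a + (a + s)) - ψ (y - a + (a + s)) := by ring_nf
    _ = χ (x - a) - χ (y - a) := h _ has _ _
    _ = ψ (x - a + a) - ψ (y - a + a) := (h a ha _ _).symm
    _ = ψ x - ψ y := by ring_nf

def SatisfiesDpKdVDeterminingEq (φ : ℤ → ℤ → ℝ → ℝ) : Prop :=
  ∀ (i n : ℤ) (u v w : ℝ), w ≠ v →
    φ (i + 1) (n + 1) (u + 1 / (w - v)) = φ i n u + (φ i (n + 1) v - φ (i + 1) n w) / (w - v) ^ 2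

theorem SatisfiesDpKdVDeterminingEq.sub_add_eq {φ : ℤ → ℤ → ℝ → ℝ}
    (hφ : SatisfiesDpKdVDeterminingEq φ) (i n : ℤ) {a : ℝ} (ha : a ≠ 0) (x y : ℝ) :
    φ (i + 1) (n + 1) (x + a) - φ (i + 1) (n + 1) (y + a) = φ i n x - φ i n y := by
  have hx := hφ i n x 0 (1 / a) (one_div_ne_zero ha)
  have hy := hφ i n y 0 (1 / a) (one_div_ne_zero ha)
  rw [sub_zero, one_div_one_div] at hx hy
  rw [hx, hy]
  ring

theorem SatisfiesDpKdVDeterminingEq.exists_affine {φ : ℤ → ℤ → ℝ → ℝ}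
    (hφ : SatisfiesDpKdVDeterminingEq φ) (hcont : ∀ i n, Continuous (φ i n)) (i n : ℤ) :
    ∃ α β : ℝ, ∀ u, φ i n u = α * u + β := by
  have hshift := forall_sub_add_eq_of_forall_ne_zero fun _ ha => hφ.sub_add_eq (i - 1) (n - 1) ha
  simp only [sub_add_cancel] at hshift
  refine ⟨φ i n 1 - φ i n 0, φ i n 0, fun u => ?_⟩
  rw [eq_smul_add_of_continuous_of_sub_add_eq (hcont i n) hshift u, smul_eq_mul, mul_comm]

theorem iteratedDeriv_two_affine (α β : ℝ) : iteratedDeriv 2 (fun u : ℝ => α * u + β) = 0 := by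
  ext u
  simp [iteratedDeriv_succ]

theorem dpkdv_symmetry_coefficient_affine
    (φ : ℤ → ℤ → ℝ → ℝ)
    (hφ : ∀ i n : ℤ, ContDiff ℝ 2 (φ i n))
    (heq : ∀ (i n : ℤ) (u v w : ℝ), w ≠ v →
      φ (i + 1) (n + 1) (u + 1 / (w - v))
        = φ i n u + (φ i (n + 1) v - φ (i + 1) n w) / (w - v) ^ 2) :
    (∀ (i n : ℤ) (u : ℝ), iteratedDeriv 2 (φ i n) u = 0) ∧
    ∃ α β : ℤ → ℤ → ℝ, ∀ (i n : ℤ) (u : ℝ), φ i n u = α i n * u + β i n := by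
  choose α β hαβ using
    SatisfiesDpKdVDeterminingEq.exists_affine heq fun i n => (hφ i n).continuous
  refine ⟨fun i n u => ?_, α, β, hαβ⟩
  rw [funext (hαβ i n), iteratedDeriv_two_affine, Pi.zero_apply]
end
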